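/- arXiv:1801.01998 — 3 statements merged into one kernel-verified Lean document; each statement's English description precedes it below -/
import Mathlib

section
/- In a graph inverse semigroup G(E), for any nonzero elements a, b, the set {x ∈ G(E) : x·a = b} is finite. -/
/-- A directed graph: vertices, edges, source and range maps. -/
structure DGraph where
  V : Type
  E : Type
  s : E → V
  r : E → V

namespace DGraph

variable {Q : DGraph}

/-- `pOk Q a l` : the list of edges `l` forms a valid path starting at vertex `a`. -/
def pOk (Q : DGraph) : Q.V → List Q.E → Prop
  | _, [] => True
  | a, e :: l => Q.s e = a ∧ pOk Q (Q.r e) l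

/-- The end vertex of an edge-list starting at `a`. -/
def pRng (Q : DGraph) (a : Q.V) (l : List Q.E) : Q.V :=
  l.foldl (fun _ e => Q.r e) a

theorem pRng_append (a : Q.V) (l₁ l₂ : List Q.E) :
    pRng Q a (l₁ ++ l₂) = pRng Q (pRng Q a l₁) l₂ :=
  List.foldl_append

theorem pOk_append {a : Q.V} {l₁ l₂ : List Q.E} (h₁ : pOk Q a l₁)
    (h₂ : pOk Q (pRng Q a l₁) l₂) : pOk Q a (l₁ ++ l₂) := by
  induction l₁ generalizing a with
  | nil => simpa [pRng] using h₂
  | cons e l ih =>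
      obtain ⟨he, hl⟩ := h₁
      exact ⟨he, ih hl h₂⟩

theorem pOk_drop {a : Q.V} {l₁ l₂ : List Q.E} (h : pOk Q a (l₁ ++ l₂)) :
    pOk Q (pRng Q a l₁) l₂ := by
  induction l₁ generalizing a with
  | nil => simpa [pRng] using h
  | cons e l ih => exact ih h.2

/-- A (finite, directed) path in the graph `Q`: a start vertex together with a
compatible list of edges.  Paths of length `0` are vertices. -/
structure GPath (Q : DGraph) where
  start : Q.V
  edges : List Q.E
  ok : pOk Q start edges

/-- The source `s(p)` of a path. -/
def GPath.src (p : GPath Q) : Q.V := p.start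

/-- The range `r(p)` of a path. -/
def GPath.rng (p : GPath Q) : Q.V := pRng Q p.start p.edges

/-- The length `|p|` of a path. -/
def GPath.length (p : GPath Q) : ℕ := p.edges.length

/-- The trivial (length zero) path at a vertex `a`. -/
def GPath.triv (Q : DGraph) (a : Q.V) : GPath Q := ⟨a, [], trivial⟩

/-- Concatenation of composable paths. -/
def GPath.comp (p q : GPath Q) (h : p.rng = q.start) : GPath Q :=
  ⟨p.start, p.edges ++ q.edges, pOk_append p.ok (by
    have hq := q.ok
    rw [← h] at hq
    exact hq)⟩

theorem GPath.comp_rng (p q : GPath Q) (h : p.rng = q.start) :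
    (p.comp q h).rng = q.rng := by
  show pRng Q p.start (p.edges ++ q.edges) = q.rng
  rw [pRng_append, show pRng Q p.start p.edges = q.start from h]
  rfl

theorem exists_sub {p q : GPath Q} (h1 : q.start = p.start)
    (h2 : p.edges <+: q.edges) :
    ∃ w : GPath Q, w.start = p.rng ∧ w.rng = q.rng ∧ p.edges ++ w.edges = q.edges := by
  obtain ⟨t, ht⟩ := h2
  have hok : pOk Q p.start (p.edges ++ t) := by rw [ht, ← h1]; exact q.ok
  refine ⟨⟨p.rng, t, pOk_drop hok⟩, rfl, ?_, ht⟩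
  show pRng Q (pRng Q p.start p.edges) t = pRng Q q.start q.edges
  rw [← pRng_append, ht, ← h1]

/-- If the path `q` decomposes as `p·w`, this is the path `w`. -/
noncomputable def subPath (p q : GPath Q) (h1 : q.start = p.start)
    (h2 : p.edges <+: q.edges) : GPath Q :=
  (exists_sub h1 h2).choose

theorem subPath_spec (p q : GPath Q) (h1 : q.start = p.start)
    (h2 : p.edges <+: q.edges) :
    (subPath p q h1 h2).start = p.rng ∧ (subPath p q h1 h2).rng = q.rng ∧
      p.edges ++ (subPath p q h1 h2).edges = q.edges :=
  (exists_sub h1 h2).choose_spec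

/-- The graph inverse semigroup `G(E)` over the graph `Q`: the element `0`
together with the elements `u v⁻¹` where `u, v` are paths with `r(u) = r(v)`. -/
inductive GIS (Q : DGraph) : Type
  | zero : GIS Q
  | elm (u v : GPath Q) (h : u.rng = v.rng) : GIS Q

instance : Zero (GIS Q) := ⟨GIS.zero⟩

-- Multiplication in the graph inverse semigroup:
-- `u₁v₁⁻¹ · u₂v₂⁻¹ = u₁wv₂⁻¹` if `u₂ = v₁w`, `u₁(v₂w)⁻¹` if `v₁ = u₂w`, `0` otherwise.
open Classical in
noncomputable def GIS.mul : GIS Q → GIS Q → GIS Q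
  | .zero, _ => .zero
  | _, .zero => .zero
  | .elm u₁ v₁ h₁, .elm u₂ v₂ h₂ =>
    if hA : u₂.start = v₁.start ∧ v₁.edges <+: u₂.edges then
      GIS.elm (u₁.comp (subPath v₁ u₂ hA.1 hA.2)
          (by rw [(subPath_spec v₁ u₂ hA.1 hA.2).1, h₁]))
        v₂
        (by rw [GPath.comp_rng, (subPath_spec v₁ u₂ hA.1 hA.2).2.1, h₂])
    else if hB : v₁.start = u₂.start ∧ u₂.edges <+: v₁.edges then
      GIS.elm u₁
        (v₂.comp (subPath u₂ v₁ hB.1 hB.2)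
          (by rw [(subPath_spec u₂ v₁ hB.1 hB.2).1, h₂]))
        (by rw [GPath.comp_rng, (subPath_spec u₂ v₁ hB.1 hB.2).2.1, h₁])
    else .zero

noncomputable instance : Mul (GIS Q) := ⟨GIS.mul⟩

/-- The inversion map of the graph inverse semigroup: `(uv⁻¹)⁻¹ = vu⁻¹`, `0⁻¹ = 0`. -/
def GIS.inv : GIS Q → GIS Q
  | .zero => .zero
  | .elm u v h => .elm v u h.symm

/-- The canonical identification of a path `u` with the element `u · r(u)⁻¹` of `G(E)`. -/
def toGIS (p : GPath Q) : GIS Q := GIS.elm p (GPath.triv Q p.rng) rfl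

end DGraph


open DGraph

/-! A solution `x = uv⁻¹` of `x · u₂v₂⁻¹ = pq⁻¹` has `u` a prefix of `p` and `v` a prefix of
`u₂` followed by what `q` adds to `v₂`. Paths with fixed start and edges a prefix of a fixed list
are finitely many, so there are finitely many solutions. -/

namespace DGraph

variable {Q : DGraph}

theorem GPath.ext {p q : GPath Q} (hstart : p.start = q.start) (hedges : p.edges = q.edges) :
    p = q := by
  cases p; cases q; cases hstart; cases hedges; rfl

theorem GPath.comp_edges (p q : GPath Q) (h : p.rng = q.start) :
    (p.comp q h).edges = p.edges ++ q.edges :=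
  rfl

theorem GPath.finite_setOf_start_eq_prefix (a : Q.V) (l : List Q.E) :
    {p : GPath Q | p.start = a ∧ p.edges <+: l}.Finite := by
  refine Set.Finite.of_finite_image (f := GPath.edges) ((List.finite_toSet l.inits).subset ?_) ?_
  · rintro _ ⟨p, ⟨-, hp⟩, rfl⟩
    exact List.mem_inits _ _ |>.2 hp
  · rintro p ⟨hp, -⟩ q ⟨hq, -⟩ h
    exact GPath.ext (hp.trans hq.symm) h

def GIS.toPaths : GIS Q → Option (GPath Q × GPath Q)
  | .zero => none
  | .elm u v _ => some (u, v)

theorem GIS.toPaths_injective : Function.Injective (GIS.toPaths (Q := Q)) := by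
  rintro (_ | ⟨u, v, h⟩) (_ | ⟨u', v', h'⟩) huv <;> simp_all [GIS.toPaths]

theorem GIS.mul_zero (x : GIS Q) : x * 0 = 0 := by
  cases x <;> rfl

theorem GIS.exists_toPaths_of_mul_eq_elm {x : GIS Q} {u₂ v₂ p q : GPath Q}
    {h₂ : u₂.rng = v₂.rng} {h : p.rng = q.rng} (hx : x * GIS.elm u₂ v₂ h₂ = GIS.elm p q h) :
    ∃ u v, x.toPaths = some (u, v) ∧ (u.start = p.start ∧ u.edges <+: p.edges) ∧
      (v.start = u₂.start ∧ v.edges <+: u₂.edges ++ q.edges.drop v₂.edges.length) := by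
  obtain _ | ⟨u, v, h₁⟩ := x
  · cases hx
  refine ⟨u, v, rfl, ?_⟩
  change GIS.mul _ _ = _ at hx
  unfold GIS.mul at hx
  dsimp only at hx
  split_ifs at hx with hA hB
  · obtain ⟨rfl, rfl⟩ := GIS.elm.inj hx
    exact ⟨⟨rfl, List.prefix_append _ _⟩, hA.1.symm, hA.2.trans (List.prefix_append _ _)⟩
  · obtain ⟨rfl, rfl⟩ := GIS.elm.inj hx
    exact ⟨⟨rfl, List.prefix_refl _⟩, hB.1,
      by rw [GPath.comp_edges, List.drop_left, (subPath_spec u₂ v hB.1 hB.2).2.2]⟩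

end DGraph

theorem stmt0_general (Q : DGraph) (a b : GIS Q) (hb : b ≠ 0) :
    {x : GIS Q | x * a = b}.Finite := by
  obtain _ | ⟨p, q, h⟩ := b
  · exact absurd rfl hb
  obtain _ | ⟨u₂, v₂, h₂⟩ := a
  · refine Set.finite_empty.subset fun x hx => ?_
    cases (GIS.mul_zero x).symm.trans hx
  have hfin := ((GPath.finite_setOf_start_eq_prefix p.start p.edges).prod
    (GPath.finite_setOf_start_eq_prefix u₂.start
      (u₂.edges ++ q.edges.drop v₂.edges.length))).image some
  refine (hfin.preimage GIS.toPaths_injective.injOn).subset fun x hx => ?_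
  obtain ⟨u, v, hx, hu, hv⟩ := GIS.exists_toPaths_of_mul_eq_elm hx
  exact ⟨(u, v), ⟨hu, hv⟩, hx.symm⟩

theorem stmt0 (Q : DGraph) (a b : GIS Q) (ha : a ≠ 0) (hb : b ≠ 0) :
    {x : GIS Q | x * a = b}.Finite :=
  stmt0_general Q a b hb
end

section
/- In a graph inverse semigroup G(E), for any nonzero elements a, b, the set {x ∈ G(E) : a·x = b} is finite. -/
open DGraph

namespace DGraph

variable {Q : DGraph}

theorem GPath.ext_of_start_edges {p q : GPath Q} (hs : p.start = q.start)
    (he : p.edges = q.edges) : p = q := by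
  cases p; cases q; cases hs; cases he; rfl

def GIS.encode : GIS Q → Option ((Q.V × List Q.E) × (Q.V × List Q.E))
  | .zero => none
  | .elm u v _ => some ((u.start, u.edges), (v.start, v.edges))

theorem GIS.encode_injective : Function.Injective (GIS.encode (Q := Q)) := by
  rintro (_ | ⟨u, v, h⟩) (_ | ⟨u', v', h'⟩) he
  · rfl
  · cases he
  · cases he
  · simp only [GIS.encode, Option.some.injEq, Prod.mk.injEq] at he
    obtain ⟨⟨hus, hue⟩, hvs, hve⟩ := he
    cases GPath.ext_of_start_edges hus hue
    cases GPath.ext_of_start_edges hvs hve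
    rfl

theorem GIS.finite_setOf_elm_sublist (s₁ s₂ : Q.V) (l₁ l₂ : List Q.E) :
    {x : GIS Q | ∃ u v h, x = .elm u v h ∧ u.start = s₁ ∧ v.start = s₂ ∧
      u.edges.Sublist l₁ ∧ v.edges.Sublist l₂}.Finite := by
  refine Set.Finite.of_finite_image ?_ GIS.encode_injective.injOn
  refine (((Set.finite_singleton s₁).prod l₁.sublists.finite_toSet).prod
    ((Set.finite_singleton s₂).prod l₂.sublists.finite_toSet)).image some |>.subset ?_
  rintro _ ⟨_, ⟨u, v, h, rfl, rfl, rfl, hu, hv⟩, rfl⟩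
  exact ⟨_, ⟨⟨Set.mem_singleton _, List.mem_sublists.2 hu⟩, Set.mem_singleton _,
    List.mem_sublists.2 hv⟩, rfl⟩

/-- Either `u₂ = v₁w` with `u₁w = p` and `v₂ = q`, or `v₁ = u₂w` with `u₁ = p` and `q = v₂w`. -/
theorem GIS.sublist_of_elm_mul_elm_eq_elm {u₁ v₁ u₂ v₂ p q : GPath Q} {h₁ : u₁.rng = v₁.rng}
    {h₂ : u₂.rng = v₂.rng} {h : p.rng = q.rng}
    (hx : GIS.elm u₁ v₁ h₁ * GIS.elm u₂ v₂ h₂ = GIS.elm p q h) :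
    u₂.start = v₁.start ∧ v₂.start = q.start ∧
      u₂.edges.Sublist (v₁.edges ++ p.edges) ∧ v₂.edges.Sublist q.edges := by
  change GIS.mul _ _ = _ at hx
  rw [GIS.mul] at hx
  split_ifs at hx with hA hB
  · injection hx with hu hv
    subst hv
    have hw := (subPath_spec v₁ u₂ hA.1 hA.2).2.2
    have hp : u₁.edges ++ (subPath v₁ u₂ hA.1 hA.2).edges = p.edges := congrArg GPath.edges hu
    refine ⟨hA.1, rfl, ?_, List.Sublist.refl _⟩
    rw [← hw]
    exact (List.Sublist.refl _).append (List.IsSuffix.sublist ⟨_, hp⟩)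
  · injection hx with hu hv
    have hq : v₂.edges ++ (subPath u₂ v₁ hB.1 hB.2).edges = q.edges := congrArg GPath.edges hv
    exact ⟨hB.1.symm, by rw [← hv]; rfl,
      hB.2.sublist.trans (List.sublist_append_left _ _), List.IsPrefix.sublist ⟨_, hq⟩⟩

end DGraph

theorem stmt1 (Q : DGraph) (a b : GIS Q) (ha : a ≠ 0) (hb : b ≠ 0) :
    {x : GIS Q | a * x = b}.Finite := by
  obtain _ | ⟨u₁, v₁, h₁⟩ := a
  · exact absurd rfl ha
  obtain _ | ⟨p, q, h⟩ := b
  · exact absurd rfl hb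
  refine (GIS.finite_setOf_elm_sublist v₁.start q.start (v₁.edges ++ p.edges) q.edges).subset ?_
  rintro (_ | ⟨u₂, v₂, h₂⟩) hx
  · exact absurd ((GIS.mul_zero _).symm.trans hx) hb.symm
  · exact ⟨u₂, v₂, h₂, rfl, GIS.sublist_of_elm_mul_elm_eq_elm hx⟩
end

section
/- Let G(E) be a graph inverse semigroup with a Hausdorff locally compact non-discrete shift-continuous topology. Then for any two compact neighborhoods U, V of 0, the set U \ V is finite. -/
open DGraph

/-!
Every nonzero element `μν⁻¹` is isolated. If an edge `f` leaves `r(ν)`, put `π = νf`; right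
multiplication by the idempotent `ππ⁻¹` is continuous and sends `μν⁻¹` to an element different
from both `0` and `μν⁻¹`, so near `μν⁻¹` every `pq⁻¹` satisfies `pq⁻¹ππ⁻¹ ∉ {0, pq⁻¹}`, i.e.
`q` is comparable with `π` without extending it: `q` is a prefix of `ν`. (If no edge leaves
`r(ν)`, comparability of `q` with `ν` already forces this.) Symmetrically `p` is a prefix of `μ`
near `μν⁻¹`, leaving only finitely many candidates, and in a T₁ space a point with a finite
neighbourhood is isolated. Then `U \ interior V` is compact and discrete, hence finite.
-/

open Filter Topology

theorem singleton_mem_nhds_of_finite_mem_nhds {X : Type*} [TopologicalSpace X] [T1Space X]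
    {z : X} {s : Set X} (hs : s.Finite) (h : s ∈ 𝓝 z) : {z} ∈ 𝓝 z := by
  filter_upwards [h, (hs.sdiff (t := {z})).isClosed.isOpen_compl.mem_nhds fun hz => hz.2 rfl]
    with x hxs hx
  by_contra hxz
  exact hx ⟨hxs, hxz⟩

namespace DGraph

variable {Q : DGraph}

namespace GPath

theorem ext_s8 {p q : GPath Q} (h₁ : p.start = q.start) (h₂ : p.edges = q.edges) : p = q := by
  cases p; cases q; cases h₁; cases h₂; rfl

def edge (f : Q.E) : GPath Q := ⟨Q.s f, [f], ⟨rfl, trivial⟩⟩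

def IsPrefix (p q : GPath Q) : Prop := q.start = p.start ∧ p.edges <+: q.edges

theorem IsPrefix.refl (p : GPath Q) : p.IsPrefix p := ⟨rfl, List.prefix_refl _⟩

theorem IsPrefix.antisymm {p q : GPath Q} (hpq : p.IsPrefix q) (hqp : q.IsPrefix p) : p = q :=
  GPath.ext_s8 hqp.1 (hpq.2.eq_of_length (le_antisymm hpq.2.length_le hqp.2.length_le))

theorem exists_edge_of_isPrefix {p q : GPath Q} (h : p.IsPrefix q) (hne : q.edges ≠ p.edges) :
    ∃ f : Q.E, Q.s f = p.rng := by
  obtain ⟨hs, t, ht⟩ := h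
  obtain _ | ⟨f, t⟩ := t
  · exact absurd (by simpa using ht.symm) hne
  · have hok : pOk Q p.start (p.edges ++ f :: t) := by rw [ht, ← hs]; exact q.ok
    exact ⟨f, (pOk_drop hok).1⟩

theorem finite_setOf_isPrefix (q : GPath Q) : {p : GPath Q | p.IsPrefix q}.Finite := by
  refine Set.Finite.of_injOn (f := GPath.edges) (t := {l | l ∈ q.edges.inits})
    (fun p hp => List.mem_inits _ _ |>.2 hp.2) (fun p hp p' hp' he => ?_) (List.finite_toSet _)
  exact GPath.ext_s8 (hp.1.symm.trans hp'.1) he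

end GPath

namespace GIS

theorem elm_congr {u v u' v' : GPath Q} {h : u.rng = v.rng} {h' : u'.rng = v'.rng}
    (hu : u = u') (hv : v = v') : GIS.elm u v h = GIS.elm u' v' h' := by
  subst hu hv; rfl

theorem elm_ne_zero (u v : GPath Q) (h : u.rng = v.rng) : GIS.elm u v h ≠ 0 := nofun

theorem zero_mul (x : GIS Q) : 0 * x = 0 := by
  cases x <;> rfl

theorem mul_zero_s8 (x : GIS Q) : x * 0 = 0 := by
  cases x <;> rfl

section Multiplication

variable {u₁ v₁ u₂ v₂ : GPath Q} {h₁ : u₁.rng = v₁.rng} {h₂ : u₂.rng = v₂.rng}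

theorem elm_mul_elm_of_isPrefix (hA : v₁.IsPrefix u₂) :
    ∃ (w : List Q.E) (X : GPath Q) (hX : X.rng = v₂.rng),
      GIS.elm u₁ v₁ h₁ * GIS.elm u₂ v₂ h₂ = GIS.elm X v₂ hX ∧
      X.start = u₁.start ∧ X.edges = u₁.edges ++ w ∧ u₂.edges = v₁.edges ++ w := by
  exact ⟨_, _, _, dif_pos hA, rfl, rfl, (subPath_spec v₁ u₂ hA.1 hA.2).2.2.symm⟩

theorem elm_mul_elm_of_not_isPrefix_of_isPrefix (hA : ¬ v₁.IsPrefix u₂) (hB : u₂.IsPrefix v₁) :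
    ∃ (w : List Q.E) (Y : GPath Q) (hY : u₁.rng = Y.rng),
      GIS.elm u₁ v₁ h₁ * GIS.elm u₂ v₂ h₂ = GIS.elm u₁ Y hY ∧
      Y.start = v₂.start ∧ Y.edges = v₂.edges ++ w ∧ v₁.edges = u₂.edges ++ w := by
  exact ⟨_, _, _, (dif_neg hA).trans (dif_pos hB), rfl, rfl,
    (subPath_spec u₂ v₁ hB.1 hB.2).2.2.symm⟩

theorem elm_mul_elm_eq_zero (hA : ¬ v₁.IsPrefix u₂) (hB : ¬ u₂.IsPrefix v₁) :
    GIS.elm u₁ v₁ h₁ * GIS.elm u₂ v₂ h₂ = 0 :=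
  (dif_neg hA).trans (dif_neg hB)

theorem elm_mul_elm_ne_zero_iff :
    GIS.elm u₁ v₁ h₁ * GIS.elm u₂ v₂ h₂ ≠ 0 ↔ v₁.IsPrefix u₂ ∨ u₂.IsPrefix v₁ := by
  by_cases hA : v₁.IsPrefix u₂
  · obtain ⟨_, _, _, he, -⟩ := elm_mul_elm_of_isPrefix (h₁ := h₁) (h₂ := h₂) hA
    simp only [he, ne_eq, elm_ne_zero, not_false_eq_true, hA, true_or]
  by_cases hB : u₂.IsPrefix v₁
  · obtain ⟨_, _, _, he, -⟩ := elm_mul_elm_of_not_isPrefix_of_isPrefix (h₁ := h₁) (h₂ := h₂) hA hB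
    simp only [he, ne_eq, elm_ne_zero, not_false_eq_true, hB, or_true]
  · simp only [elm_mul_elm_eq_zero hA hB, ne_eq, not_true_eq_false, hA, hB, or_self]

theorem isPrefix_of_elm_mul_elm_eq {X Y : GPath Q} {h : X.rng = Y.rng}
    (he : GIS.elm u₁ v₁ h₁ * GIS.elm u₂ v₂ h₂ = GIS.elm X Y h) :
    u₁.IsPrefix X ∧ v₂.IsPrefix Y := by
  by_cases hA : v₁.IsPrefix u₂
  · obtain ⟨w, X', _, he', hs, hX, -⟩ := elm_mul_elm_of_isPrefix (h₁ := h₁) (h₂ := h₂) hA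
    obtain ⟨rfl, rfl⟩ := GIS.elm.inj (he'.symm.trans he)
    exact ⟨⟨hs, hX ▸ List.prefix_append _ _⟩, GPath.IsPrefix.refl _⟩
  by_cases hB : u₂.IsPrefix v₁
  · obtain ⟨w, Y', _, he', hs, hY, -⟩ :=
      elm_mul_elm_of_not_isPrefix_of_isPrefix (h₁ := h₁) (h₂ := h₂) hA hB
    obtain ⟨rfl, rfl⟩ := GIS.elm.inj (he'.symm.trans he)
    exact ⟨GPath.IsPrefix.refl _, ⟨hs, hY ▸ List.prefix_append _ _⟩⟩
  · exact absurd (elm_mul_elm_eq_zero hA hB ▸ he) (elm_ne_zero _ _ _).symm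

end Multiplication

theorem elm_mul_idempotent {p q π : GPath Q} {h : p.rng = q.rng} (hπ : π.IsPrefix q) :
    GIS.elm p q h * GIS.elm π π rfl = GIS.elm p q h := by
  by_cases hA : q.IsPrefix π
  · obtain rfl := hπ.antisymm hA
    obtain ⟨w, X, _, he, hs, hX, hw⟩ := elm_mul_elm_of_isPrefix (h₁ := h) (h₂ := rfl) hA
    rw [he]
    refine elm_congr (GPath.ext_s8 hs ?_) rfl
    rw [hX, List.append_cancel_left (hw.symm.trans (List.append_nil _).symm), List.append_nil]
  · obtain ⟨w, Y, _, he, hs, hY, hw⟩ :=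
      elm_mul_elm_of_not_isPrefix_of_isPrefix (h₁ := h) (h₂ := rfl) hA hπ
    exact he.trans (elm_congr rfl (GPath.ext_s8 (hs.trans hπ.1.symm) (hY.trans hw.symm)))

theorem idempotent_mul_elm {p q π : GPath Q} {h : p.rng = q.rng} (hπ : π.IsPrefix p) :
    GIS.elm π π rfl * GIS.elm p q h = GIS.elm p q h := by
  obtain ⟨w, X, _, he, hs, hX, hw⟩ := elm_mul_elm_of_isPrefix (h₁ := rfl) (h₂ := h) hπ
  exact he.trans (elm_congr (GPath.ext_s8 (hs.trans hπ.1.symm) (hX.trans hw.symm)) rfl)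

theorem exists_eq_elm_of_mul_elm_ne_zero {x : GIS Q} {u v : GPath Q} {h : u.rng = v.rng}
    (hx : x * GIS.elm u v h ≠ 0) :
    ∃ (p q : GPath Q) (hpq : p.rng = q.rng),
      x = GIS.elm p q hpq ∧ (q.IsPrefix u ∨ u.IsPrefix q) := by
  cases x with
  | zero => exact absurd (zero_mul _) hx
  | elm p q hpq => exact ⟨p, q, hpq, rfl, elm_mul_elm_ne_zero_iff.1 hx⟩

theorem exists_eq_elm_of_elm_mul_ne_zero {x : GIS Q} {u v : GPath Q} {h : u.rng = v.rng}
    (hx : GIS.elm u v h * x ≠ 0) :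
    ∃ (p q : GPath Q) (hpq : p.rng = q.rng),
      x = GIS.elm p q hpq ∧ (v.IsPrefix p ∨ p.IsPrefix v) := by
  cases x with
  | zero => exact absurd (mul_zero_s8 _) hx
  | elm p q hpq => exact ⟨p, q, hpq, rfl, elm_mul_elm_ne_zero_iff.1 hx⟩

theorem finite_setOf_elm_isPrefix (μ ν : GPath Q) :
    {x : GIS Q | ∃ (p q : GPath Q) (h : p.rng = q.rng),
      x = GIS.elm p q h ∧ p.IsPrefix μ ∧ q.IsPrefix ν}.Finite := by
  classical
  refine (((GPath.finite_setOf_isPrefix μ).prod (GPath.finite_setOf_isPrefix ν)).image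
    fun pq => if h : pq.1.rng = pq.2.rng then GIS.elm pq.1 pq.2 h else 0).subset ?_
  rintro x ⟨p, q, h, rfl, hp, hq⟩
  exact ⟨(p, q), ⟨hp, hq⟩, dif_pos h⟩

section Topology

variable [TopologicalSpace (GIS Q)] [T2Space (GIS Q)]

theorem eventually_isPrefix_right (hr : ∀ a : GIS Q, Continuous (fun x => x * a))
    {μ ν : GPath Q} (h : μ.rng = ν.rng) :
    ∀ᶠ x in 𝓝 (GIS.elm μ ν h), ∃ (p q : GPath Q) (hpq : p.rng = q.rng),
      x = GIS.elm p q hpq ∧ q.IsPrefix ν := by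
  by_cases hf : ∃ f : Q.E, Q.s f = ν.rng
  · obtain ⟨f, hf⟩ := hf
    set π := ν.comp (GPath.edge f) hf.symm
    have hνπ : ν.IsPrefix π := ⟨rfl, List.prefix_append _ _⟩
    have hπν : ¬ π.IsPrefix ν := fun hπ => by
      simpa [π, GPath.comp, GPath.edge] using hπ.2.length_le
    have hne0 : GIS.elm μ ν h * GIS.elm π π rfl ≠ 0 := elm_mul_elm_ne_zero_iff.2 (.inl hνπ)
    have hne : GIS.elm μ ν h * GIS.elm π π rfl ≠ GIS.elm μ ν h :=
      fun he => hπν (isPrefix_of_elm_mul_elm_eq he).2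
    filter_upwards [(hr _).continuousAt.eventually_ne hne0,
      ((hr _).continuousAt.ne_iff_eventually_ne continuousAt_id).1 hne] with x hx0 hx
    obtain ⟨p, q, hpq, rfl, hq | hq⟩ := exists_eq_elm_of_mul_elm_ne_zero hx0
    · have hqπ : q.edges ≠ ν.edges ++ [f] := fun he =>
        hx (elm_mul_idempotent ⟨hq.1.symm, he ▸ List.prefix_refl _⟩)
      exact ⟨p, q, hpq, rfl, hq.1, (List.prefix_concat_iff.1 hq.2).resolve_left hqπ⟩
    · exact absurd (elm_mul_idempotent hq) hx
  · have hne0 : GIS.elm μ ν h * GIS.elm ν ν rfl ≠ 0 := by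
      rw [elm_mul_idempotent (.refl ν)]
      exact elm_ne_zero _ _ _
    filter_upwards [(hr _).continuousAt.eventually_ne hne0] with x hx0
    obtain ⟨p, q, hpq, rfl, hq | hq⟩ := exists_eq_elm_of_mul_elm_ne_zero hx0
    · exact ⟨p, q, hpq, rfl, hq⟩
    · by_cases hqν : q.edges = ν.edges
      · exact ⟨p, q, hpq, rfl, hq.1.symm, hqν ▸ List.prefix_refl _⟩
      · exact absurd (GPath.exists_edge_of_isPrefix hq hqν) hf

theorem eventually_isPrefix_left (hl : ∀ a : GIS Q, Continuous (fun x => a * x))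
    {μ ν : GPath Q} (h : μ.rng = ν.rng) :
    ∀ᶠ x in 𝓝 (GIS.elm μ ν h), ∃ (p q : GPath Q) (hpq : p.rng = q.rng),
      x = GIS.elm p q hpq ∧ p.IsPrefix μ := by
  by_cases hf : ∃ f : Q.E, Q.s f = μ.rng
  · obtain ⟨f, hf⟩ := hf
    set π := μ.comp (GPath.edge f) hf.symm
    have hμπ : μ.IsPrefix π := ⟨rfl, List.prefix_append _ _⟩
    have hπμ : ¬ π.IsPrefix μ := fun hπ => by
      simpa [π, GPath.comp, GPath.edge] using hπ.2.length_le
    have hne0 : GIS.elm π π rfl * GIS.elm μ ν h ≠ 0 := elm_mul_elm_ne_zero_iff.2 (.inr hμπ)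
    have hne : GIS.elm π π rfl * GIS.elm μ ν h ≠ GIS.elm μ ν h :=
      fun he => hπμ (isPrefix_of_elm_mul_elm_eq he).1
    filter_upwards [(hl _).continuousAt.eventually_ne hne0,
      ((hl _).continuousAt.ne_iff_eventually_ne continuousAt_id).1 hne] with x hx0 hx
    obtain ⟨p, q, hpq, rfl, hp | hp⟩ := exists_eq_elm_of_elm_mul_ne_zero hx0
    · exact absurd (idempotent_mul_elm hp) hx
    · have hpπ : p.edges ≠ μ.edges ++ [f] := fun he =>
        hx (idempotent_mul_elm ⟨hp.1.symm, he ▸ List.prefix_refl _⟩)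
      exact ⟨p, q, hpq, rfl, hp.1, (List.prefix_concat_iff.1 hp.2).resolve_left hpπ⟩
  · have hne0 : GIS.elm μ μ rfl * GIS.elm μ ν h ≠ 0 := by
      rw [idempotent_mul_elm (.refl μ)]
      exact elm_ne_zero _ _ _
    filter_upwards [(hl _).continuousAt.eventually_ne hne0] with x hx0
    obtain ⟨p, q, hpq, rfl, hp | hp⟩ := exists_eq_elm_of_elm_mul_ne_zero hx0
    · by_cases hpμ : p.edges = μ.edges
      · exact ⟨p, q, hpq, rfl, hp.1.symm, hpμ ▸ List.prefix_refl _⟩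
      · exact absurd (GPath.exists_edge_of_isPrefix hp hpμ) hf
    · exact ⟨p, q, hpq, rfl, hp⟩

theorem singleton_mem_nhds_of_ne_zero (hl : ∀ a : GIS Q, Continuous (fun x => a * x))
    (hr : ∀ a : GIS Q, Continuous (fun x => x * a)) {z : GIS Q} (hz : z ≠ 0) : {z} ∈ 𝓝 z := by
  obtain _ | ⟨μ, ν, h⟩ := z
  · exact absurd rfl hz
  refine singleton_mem_nhds_of_finite_mem_nhds (finite_setOf_elm_isPrefix μ ν) ?_
  filter_upwards [eventually_isPrefix_left hl h, eventually_isPrefix_right hr h] with x hx hx'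
  obtain ⟨p, q, hpq, rfl, hp⟩ := hx
  obtain ⟨p', q', _, he, hq'⟩ := hx'
  obtain ⟨rfl, rfl⟩ := GIS.elm.inj he
  exact ⟨p, q, hpq, rfl, hp, hq'⟩

end Topology

end GIS

end DGraph

theorem stmt8_general (Q : DGraph) [TopologicalSpace (GIS Q)] [T2Space (GIS Q)]
    (hs : ∀ a : GIS Q, Continuous (fun x => a * x) ∧ Continuous (fun x => x * a)) :
    ∀ U V : Set (GIS Q), IsCompact U → U ∈ nhds 0 → IsCompact V → V ∈ nhds 0 →
      (U \ V).Finite := by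
  intro U V hU _ _ hV
  have hK : IsCompact (U \ interior V) := hU.diff isOpen_interior
  have hdisc : IsDiscrete (U \ interior V) := .of_nhdsWithin fun z hz =>
    le_pure_iff.2 <| mem_nhdsWithin_of_mem_nhds <|
      GIS.singleton_mem_nhds_of_ne_zero (fun a => (hs a).1) (fun a => (hs a).2)
        fun h0 => hz.2 (h0 ▸ mem_interior_iff_mem_nhds.2 hV)
  exact (hK.finite hdisc).subset (Set.sdiff_subset_sdiff_right interior_subset)

theorem stmt8 (Q : DGraph) [TopologicalSpace (GIS Q)] [T2Space (GIS Q)]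
    [LocallyCompactSpace (GIS Q)]
    (hs : ∀ a : GIS Q, Continuous (fun x => a * x) ∧ Continuous (fun x => x * a))
    (hnd : ¬ DiscreteTopology (GIS Q)) :
    ∀ U V : Set (GIS Q), IsCompact U → U ∈ nhds 0 → IsCompact V → V ∈ nhds 0 →
      (U \ V).Finite :=
  stmt8_general Q hs
end
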